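/- Let G be a simple simply-connected algebraic group over an algebraically closed field k of characteristic p > 0 very good for G, g its Lie algebra, d = (p-1)·dim g, and I ⊂ Sg* the ideal generated by {v^p : v ∈ g*}. Then the quotient S^d g*/(S^d g* ∩ I) is a one-dimensional trivial G-module; i.e. there is a short exact sequence of G-modules 0 → S^d g* ∩ I → S^d g* →^ε k → 0. -/

import Mathlib

/-!
In characteristic `p` the Frobenius is additive, so `I` is the monomial ideal
`(x₁^p, …, x_m^p)`. Every monomial of degree `d = (p-1)m` other than `μ = ∏ xᵢ^(p-1)` has some
exponent `≥ p`, so `S^d / (S^d ∩ I)` is the line spanned by `μ`. A linear substitution with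
matrix `M` preserves `I` and sends `μ` to `det(M)^(p-1) μ` modulo `I`: this holds for
transvections and diagonal matrices, which generate `GL_m`, and is multiplicative in `M`. Unimodularity of the action on `S¹` therefore
makes `G` act trivially on the line.
-/

open scoped Matrix

namespace MvPolynomial

variable (σ R : Type*) [CommRing R] (p : ℕ)

noncomputable def varPowIdeal : Ideal (MvPolynomial σ R) :=
  Ideal.span (Set.range fun i => X i ^ p)

variable {σ R p}

theorem mem_varPowIdeal_iff {f : MvPolynomial σ R} :
    f ∈ varPowIdeal σ R p ↔ ∀ s ∈ f.support, ∃ i, p ≤ s i := by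
  have : (Set.range fun i : σ => (X i : MvPolynomial σ R) ^ p) =
      (fun s => monomial s (1 : R)) '' Set.range fun i => Finsupp.single i p := by
    rw [← Set.range_comp]; simp [Function.comp_def, X_pow_eq_monomial]
  rw [varPowIdeal, this, mem_ideal_span_monomial_image]
  simp [Finsupp.single_le_iff]

theorem pow_mem_varPowIdeal_of_mem_idealOfVars [Fact p.Prime] [CharP R p]
    {f : MvPolynomial σ R} (hf : f ∈ idealOfVars σ R) : f ^ p ∈ varPowIdeal σ R p := by
  have := Ideal.mem_map_of_mem (frobenius (MvPolynomial σ R) p) hf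
  rwa [Ideal.map_span, ← Set.range_comp, frobenius_def] at this

theorem map_mem_varPowIdeal [Fact p.Prime] [CharP R p]
    {φ : MvPolynomial σ R →ₐ[R] MvPolynomial σ R} (hφ : ∀ i, φ (X i) ∈ idealOfVars σ R)
    {f : MvPolynomial σ R} (hf : f ∈ varPowIdeal σ R p) :
    φ f ∈ varPowIdeal σ R p := by
  refine Ideal.map_le_iff_le_comap.mpr (Ideal.span_le.mpr ?_) (Ideal.mem_map_of_mem φ hf)
  rintro _ ⟨i, rfl⟩
  simpa using pow_mem_varPowIdeal_of_mem_idealOfVars (hφ i)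

theorem homogeneousSubmodule_one_le_idealOfVars :
    homogeneousSubmodule σ R 1 ≤ (idealOfVars σ R).restrictScalars R := by
  rw [homogeneousSubmodule_one_eq_span_X]
  exact Submodule.span_le_restrictScalars R _ _

theorem span_pow_homogeneousSubmodule_one_eq_varPowIdeal [Fact p.Prime] [CharP R p] :
    Ideal.span {f | ∃ v ∈ homogeneousSubmodule σ R 1, f = v ^ p} = varPowIdeal σ R p := by
  refine le_antisymm (Ideal.span_le.mpr ?_) (Ideal.span_le.mpr ?_)
  · rintro _ ⟨v, hv, rfl⟩
    exact pow_mem_varPowIdeal_of_mem_idealOfVars (homogeneousSubmodule_one_le_idealOfVars hv)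
  · rintro _ ⟨i, rfl⟩
    exact Ideal.subset_span ⟨X i, isHomogeneous_X R i, rfl⟩

section TopDegree

variable (σ R p) [Fintype σ]

noncomputable def topExponent : σ →₀ ℕ := Finsupp.equivFunOnFinite.symm fun _ => p - 1

noncomputable def topMonomial : MvPolynomial σ R := monomial (topExponent σ p) 1

abbrev topHomogeneous : Submodule R (MvPolynomial σ R) :=
  homogeneousSubmodule σ R ((p - 1) * Fintype.card σ)

variable {σ R p}

@[simp]
theorem topExponent_apply (i : σ) : topExponent σ p i = p - 1 := rfl

theorem degree_topExponent : (topExponent σ p).degree = (p - 1) * Fintype.card σ := by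
  simp [Finsupp.degree_eq_sum, mul_comm]

theorem topMonomial_eq_prod : topMonomial σ R p = ∏ i, X i ^ (p - 1) := by
  rw [topMonomial, monomial_eq, C_1, one_mul, Finsupp.prod_fintype _ _ fun i => pow_zero _]
  rfl

theorem topMonomial_mem_topHomogeneous : topMonomial σ R p ∈ topHomogeneous σ R p :=
  isHomogeneous_monomial _ degree_topExponent

theorem coeff_topExponent_eq_zero_of_mem_varPowIdeal (hp : 0 < p) {f : MvPolynomial σ R}
    (hf : f ∈ varPowIdeal σ R p) : coeff (topExponent σ p) f = 0 := by
  by_contra h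
  obtain ⟨i, hi⟩ := mem_varPowIdeal_iff.mp hf _ (mem_support_iff.mpr h)
  rw [topExponent_apply] at hi
  omega

theorem eq_topExponent_of_degree_eq {s : σ →₀ ℕ} (hs : s.degree = (p - 1) * Fintype.card σ)
    (hlt : ∀ i, s i < p) : s = topExponent σ p := by
  have hle : ∀ i ∈ Finset.univ, s i ≤ topExponent σ p i := fun i _ =>
    Nat.le_sub_one_of_lt (hlt i)
  have hsum : ∑ i, s i = ∑ i, topExponent σ p i := by
    rw [← Finsupp.degree_eq_sum, ← Finsupp.degree_eq_sum, hs, degree_topExponent]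
  ext i
  exact (Finset.sum_eq_sum_iff_of_le hle).mp hsum i (Finset.mem_univ i)

theorem sub_smul_topMonomial_mem_varPowIdeal {f : MvPolynomial σ R}
    (hf : f ∈ topHomogeneous σ R p) :
    f - coeff (topExponent σ p) f • topMonomial σ R p ∈ varPowIdeal σ R p := by
  classical
  refine mem_varPowIdeal_iff.mpr fun s hs => ?_
  by_contra! hlt
  have hcoeff : ∀ t, coeff t (f - coeff (topExponent σ p) f • topMonomial σ R p) =
      coeff t f - if topExponent σ p = t then coeff (topExponent σ p) f else 0 := by
    intro t; simp [topMonomial, coeff_monomial]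
  rw [mem_support_iff, hcoeff] at hs
  have hne : s ≠ topExponent σ p := by rintro rfl; simp at hs
  refine hne (eq_topExponent_of_degree_eq ?_ hlt)
  rw [if_neg (Ne.symm hne), sub_zero] at hs
  rw [Finsupp.degree_eq_weight_one]
  exact hf hs

variable (σ R p)

-- The map `ε : S^d 𝔤* → k`: the coefficient of `μ`.
noncomputable def topCoeff : topHomogeneous σ R p →ₗ[R] R :=
  (lcoeff R (topExponent σ p)).comp (topHomogeneous σ R p).subtype

variable {σ R p}

theorem ker_topCoeff (hp : 0 < p) :
    LinearMap.ker (topCoeff σ R p) = ((varPowIdeal σ R p).restrictScalars R ⊓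
      topHomogeneous σ R p).comap (topHomogeneous σ R p).subtype := by
  ext ⟨f, hf⟩
  simp only [LinearMap.mem_ker, topCoeff, LinearMap.comp_apply, Submodule.subtype_apply,
    lcoeff_apply, Submodule.mem_comap, Submodule.mem_inf, Submodule.restrictScalars_mem,
    and_iff_left hf]
  refine ⟨fun h => ?_, coeff_topExponent_eq_zero_of_mem_varPowIdeal hp⟩
  simpa [h] using sub_smul_topMonomial_mem_varPowIdeal hf

theorem topCoeff_surjective : Function.Surjective (topCoeff σ R p) := by
  classical
  exact fun c => ⟨c • ⟨topMonomial σ R p, topMonomial_mem_topHomogeneous⟩, by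
    simp [topCoeff, topMonomial, coeff_monomial]⟩

theorem finrank_topHomogeneous_quotient_varPowIdeal [Nontrivial R] (hp : 0 < p) :
    Module.finrank R (topHomogeneous σ R p ⧸ ((varPowIdeal σ R p).restrictScalars R ⊓
      topHomogeneous σ R p).comap (topHomogeneous σ R p).subtype) = 1 := by
  rw [← ker_topCoeff hp, (topCoeff σ R p).quotKerEquivOfSurjective topCoeff_surjective
    |>.finrank_eq, Module.finrank_self]

end TopDegree

section LinearSubstitution

variable [Fintype σ]

theorem bind₁_toMvPolynomial_mul (A B : Matrix σ σ R) :
    bind₁ (A * B).toMvPolynomial =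
      (bind₁ B.toMvPolynomial).comp (bind₁ A.toMvPolynomial) := by
  ext1 i
  simp [Matrix.toMvPolynomial_mul]

theorem bind₁_toMvPolynomial_mem_varPowIdeal [Fact p.Prime] [CharP R p] (M : Matrix σ σ R)
    {f : MvPolynomial σ R} (hf : f ∈ varPowIdeal σ R p) :
    bind₁ M.toMvPolynomial f ∈ varPowIdeal σ R p :=
  map_mem_varPowIdeal (fun i => by
    rw [bind₁_X_right]
    exact homogeneousSubmodule_one_le_idealOfVars (M.toMvPolynomial_isHomogeneous i)) hf

theorem toMvPolynomial_diagonal [DecidableEq σ] (D : σ → R) (i : σ) :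
    (Matrix.diagonal D).toMvPolynomial i = C (D i) * X i := by
  simp [Matrix.toMvPolynomial, Matrix.diagonal_apply, C_mul_X_eq_monomial, apply_ite (monomial _)]

theorem toMvPolynomial_transvection [DecidableEq σ] (i j : σ) (c : R) (l : σ) :
    (Matrix.transvection i j c).toMvPolynomial l = X l + if l = i then C c * X j else 0 := by
  rw [Matrix.transvection, Matrix.toMvPolynomial_add, Matrix.toMvPolynomial_one, Pi.add_apply]
  split_ifs with h
  · subst h
    simp [Matrix.toMvPolynomial, Matrix.single_apply, C_mul_X_eq_monomial, apply_ite (monomial _)]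
  · simp [Matrix.toMvPolynomial, Ne.symm h]

theorem bind₁_toMvPolynomial_diagonal_topMonomial [DecidableEq σ] (D : σ → R) :
    bind₁ (Matrix.diagonal D).toMvPolynomial (topMonomial σ R p) =
      (∏ i, D i) ^ (p - 1) • topMonomial σ R p := by
  simp [topMonomial_eq_prod, toMvPolynomial_diagonal, mul_pow, Finset.prod_mul_distrib,
    Finset.prod_pow, smul_eq_C_mul]

theorem bind₁_toMvPolynomial_transvection_topMonomial_sub_mem [DecidableEq σ] (hp : 0 < p)
    (t : Matrix.TransvectionStruct σ R) :
    bind₁ t.toMatrix.toMvPolynomial (topMonomial σ R p) - topMonomial σ R p ∈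
      varPowIdeal σ R p := by
  obtain ⟨i, j, hij, c⟩ := t
  -- Only the factor `xᵢ^(p-1)` of `μ` moves, and it changes by a multiple of `xⱼ`, while
  -- `xⱼ^(p-1)` divides the remaining factors.
  set Q : MvPolynomial σ R := ∏ l ∈ Finset.univ.erase i, X l ^ (p - 1)
  have hμ : topMonomial σ R p = X i ^ (p - 1) * Q := by
    rw [topMonomial_eq_prod, ← Finset.mul_prod_erase _ _ (Finset.mem_univ i)]
  have hQ : bind₁ (Matrix.transvection i j c).toMvPolynomial Q = Q := by
    rw [map_prod]
    exact Finset.prod_congr rfl fun l hl => by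
      simp [toMvPolynomial_transvection, (Finset.mem_erase.mp hl).1]
  have hXj : X j ∣ (X i + C c * X j) ^ (p - 1) - X i ^ (p - 1) := by
    have h := sub_dvd_pow_sub_pow (X i + C c * X j) (X i) (p - 1)
    rw [add_sub_cancel_left] at h
    exact (dvd_mul_left (X j) (C c)).trans h
  have hQj : X j ^ (p - 1) ∣ Q :=
    Finset.dvd_prod_of_mem _ (Finset.mem_erase.mpr ⟨hij.symm, Finset.mem_univ j⟩)
  have hdvd : X j ^ p ∣ ((X i + C c * X j) ^ (p - 1) - X i ^ (p - 1)) * Q := by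
    rw [← Nat.sub_add_cancel hp, pow_succ']
    exact mul_dvd_mul hXj hQj
  refine Ideal.mem_of_dvd _ ?_ (Ideal.subset_span ⟨j, rfl⟩)
  convert hdvd using 1
  rw [Matrix.TransvectionStruct.toMatrix_mk, hμ, map_mul, hQ, map_pow, bind₁_X_right,
    toMvPolynomial_transvection, if_pos rfl, sub_mul]

variable {k : Type*} [Field k] [CharP k p] [Fact p.Prime]

theorem bind₁_toMvPolynomial_topMonomial_sub_det_pow_smul_mem [DecidableEq σ]
    (M : Matrix σ σ k) :
    bind₁ M.toMvPolynomial (topMonomial σ k p) - M.det ^ (p - 1) • topMonomial σ k p ∈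
      varPowIdeal σ k p := by
  refine Matrix.diagonal_transvection_induction
    (fun N => bind₁ N.toMvPolynomial (topMonomial σ k p) -
      N.det ^ (p - 1) • topMonomial σ k p ∈ varPowIdeal σ k p)
    M (fun D _ => ?_) (fun t => ?_) (fun A B hA hB => ?_)
  · simp [bind₁_toMvPolynomial_diagonal_topMonomial]
  · simpa [t.hij, Matrix.TransvectionStruct.toMatrix] using
      bind₁_toMvPolynomial_transvection_topMonomial_sub_mem (Fact.out : p.Prime).pos t
  · have hsplit : bind₁ (A * B).toMvPolynomial (topMonomial σ k p) -
        (A * B).det ^ (p - 1) • topMonomial σ k p =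
        bind₁ B.toMvPolynomial (bind₁ A.toMvPolynomial (topMonomial σ k p) -
          A.det ^ (p - 1) • topMonomial σ k p) +
        A.det ^ (p - 1) • (bind₁ B.toMvPolynomial (topMonomial σ k p) -
          B.det ^ (p - 1) • topMonomial σ k p) := by
      rw [bind₁_toMvPolynomial_mul, AlgHom.comp_apply, map_sub, map_smul, smul_sub, smul_smul,
        Matrix.det_mul, mul_pow]
      abel
    rw [hsplit]
    exact add_mem (bind₁_toMvPolynomial_mem_varPowIdeal B hA)
      (Submodule.smul_of_tower_mem _ _ hB)

theorem bind₁_toMvPolynomial_sub_det_pow_smul_mem [DecidableEq σ] (M : Matrix σ σ k)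
    {f : MvPolynomial σ k} (hf : f ∈ topHomogeneous σ k p) :
    bind₁ M.toMvPolynomial f - M.det ^ (p - 1) • f ∈ varPowIdeal σ k p := by
  set r := f - coeff (topExponent σ p) f • topMonomial σ k p
  have hr : r ∈ varPowIdeal σ k p := sub_smul_topMonomial_mem_varPowIdeal hf
  have hsplit : bind₁ M.toMvPolynomial f - M.det ^ (p - 1) • f =
      coeff (topExponent σ p) f • (bind₁ M.toMvPolynomial (topMonomial σ k p) -
        M.det ^ (p - 1) • topMonomial σ k p) +
      (bind₁ M.toMvPolynomial r - M.det ^ (p - 1) • r) := by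
    simp only [r, map_sub, map_smul, smul_sub, smul_comm (coeff (topExponent σ p) f)]
    abel
  rw [hsplit]
  exact add_mem (Submodule.smul_of_tower_mem _ _
    (bind₁_toMvPolynomial_topMonomial_sub_det_pow_smul_mem M))
    (sub_mem (bind₁_toMvPolynomial_mem_varPowIdeal M hr)
      (Submodule.smul_of_tower_mem _ _ hr))

end LinearSubstitution

section DegreeOne

variable (σ R)

noncomputable def degreeOneBasis : Module.Basis σ R (homogeneousSubmodule σ R 1) :=
  (Module.Basis.span (linearIndependent_X σ R)).map
    (LinearEquiv.ofEq _ _ homogeneousSubmodule_one_eq_span_X.symm)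

variable {σ R}

@[simp]
theorem coe_degreeOneBasis (i : σ) : (degreeOneBasis σ R i : MvPolynomial σ R) = X i := by
  simp [degreeOneBasis, Module.Basis.span_apply]

theorem eq_bind₁_toMvPolynomial_toMatrix [Fintype σ] [DecidableEq σ]
    (φ : MvPolynomial σ R →ₐ[R] MvPolynomial σ R)
    (hφ : ∀ f ∈ homogeneousSubmodule σ R 1, φ f ∈ homogeneousSubmodule σ R 1) :
    φ = bind₁ (LinearMap.toMatrix (degreeOneBasis σ R) (degreeOneBasis σ R)
      (φ.toLinearMap.restrict hφ))ᵀ.toMvPolynomial := by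
  set b := degreeOneBasis σ R
  set f := φ.toLinearMap.restrict hφ
  ext1 i
  calc φ (X i) = (f (b i) : MvPolynomial σ R) := by rw [← coe_degreeOneBasis]; rfl
    _ = ((∑ j, b.repr (f (b i)) j • b j : homogeneousSubmodule σ R 1) :
        MvPolynomial σ R) := by
      rw [b.sum_repr]
    _ = ∑ j, b.repr (f (b i)) j • X j := by
      simp only [AddSubmonoidClass.coe_finsetSum, SetLike.val_smul, b, coe_degreeOneBasis]
    _ = _ := by
      simp [Matrix.toMvPolynomial, LinearMap.toMatrix_apply, smul_eq_C_mul, C_mul_X_eq_monomial]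

end DegreeOne

end MvPolynomial

open MvPolynomial

theorem statement17_general (p : ℕ) [Fact p.Prime] (k : Type) [Field k] [CharP k p]
    -- `m = dim 𝔤 > 0`:
    (m : ℕ)
    -- the group `G` acting on `S𝔤* = k[x₁, …, x_m]` by algebra automorphisms:
    (G : Type) [Group G]
    (ρ : G →* (MvPolynomial (Fin m) k ≃ₐ[k] MvPolynomial (Fin m) k))
    -- the action preserves the grading of `S𝔤*`:
    (hgraded : ∀ (γ : G) (n : ℕ), ∀ f ∈ homogeneousSubmodule (Fin m) k n,
      ρ γ f ∈ homogeneousSubmodule (Fin m) k n)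
    -- the action on `𝔤* = S¹𝔤*` is unimodular (it is the coadjoint action of a simple,
    -- simply-connected group):
    (hdet : ∀ γ : G,
      LinearMap.det ((ρ γ).toLinearMap.restrict
        (fun f hf => hgraded γ 1 f hf)) = 1) :
    -- with `d = (p-1)·m` and `I = ({v^p : v ∈ 𝔤*})`:
    ∀ (d : ℕ), d = (p - 1) * m →
    ∀ (I : Ideal (MvPolynomial (Fin m) k)),
      I = Ideal.span {f | ∃ v ∈ homogeneousSubmodule (Fin m) k 1, f = v ^ p} →
    -- the quotient `S^d 𝔤*/(S^d 𝔤* ∩ I)` is one-dimensional …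
    (Module.finrank k
        (↥(homogeneousSubmodule (Fin m) k d) ⧸
          ((I.restrictScalars k ⊓ homogeneousSubmodule (Fin m) k d).comap
            (homogeneousSubmodule (Fin m) k d).subtype)) = 1) ∧
    -- … and `G` acts trivially on it:
    (∀ (γ : G), ∀ x ∈ homogeneousSubmodule (Fin m) k d, ρ γ x - x ∈ I) := by
  rintro d rfl I rfl
  rw [span_pow_homogeneousSubmodule_one_eq_varPowIdeal]
  have hcard : (p - 1) * m = (p - 1) * Fintype.card (Fin m) := by rw [Fintype.card_fin]
  rw [hcard]
  refine ⟨finrank_topHomogeneous_quotient_varPowIdeal (Fact.out : p.Prime).pos,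
    fun γ x hx => ?_⟩
  set A := LinearMap.toMatrix (degreeOneBasis (Fin m) k) (degreeOneBasis (Fin m) k)
    ((ρ γ).toAlgHom.toLinearMap.restrict (hgraded γ 1))
  have hρ : (ρ γ).toAlgHom = bind₁ Aᵀ.toMvPolynomial :=
    eq_bind₁_toMvPolynomial_toMatrix _ (hgraded γ 1)
  have hA : Aᵀ.det = 1 := by
    rw [Matrix.det_transpose, LinearMap.det_toMatrix]
    exact hdet γ
  simpa [hA, ← hρ] using bind₁_toMvPolynomial_sub_det_pow_smul_mem Aᵀ hx

theorem statement17 (p : ℕ) [Fact p.Prime] (k : Type) [Field k] [IsAlgClosed k] [CharP k p]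
    -- `m = dim 𝔤 > 0`:
    (m : ℕ) (hm : 0 < m)
    -- the group `G` acting on `S𝔤* = k[x₁, …, x_m]` by algebra automorphisms:
    (G : Type) [Group G]
    (ρ : G →* (MvPolynomial (Fin m) k ≃ₐ[k] MvPolynomial (Fin m) k))
    -- the action preserves the grading of `S𝔤*`:
    (hgraded : ∀ (γ : G) (n : ℕ), ∀ f ∈ homogeneousSubmodule (Fin m) k n,
      ρ γ f ∈ homogeneousSubmodule (Fin m) k n)
    -- the action on `𝔤* = S¹𝔤*` is unimodular (it is the coadjoint action of a simple,
    -- simply-connected group):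
    (hdet : ∀ γ : G,
      LinearMap.det ((ρ γ).toLinearMap.restrict
        (fun f hf => hgraded γ 1 f hf)) = 1) :
    -- with `d = (p-1)·m` and `I = ({v^p : v ∈ 𝔤*})`:
    ∀ (d : ℕ), d = (p - 1) * m →
    ∀ (I : Ideal (MvPolynomial (Fin m) k)),
      I = Ideal.span {f | ∃ v ∈ homogeneousSubmodule (Fin m) k 1, f = v ^ p} →
    -- the quotient `S^d 𝔤*/(S^d 𝔤* ∩ I)` is one-dimensional …
    (Module.finrank k
        (↥(homogeneousSubmodule (Fin m) k d) ⧸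
          ((I.restrictScalars k ⊓ homogeneousSubmodule (Fin m) k d).comap
            (homogeneousSubmodule (Fin m) k d).subtype)) = 1) ∧
    -- … and `G` acts trivially on it:
    (∀ (γ : G), ∀ x ∈ homogeneousSubmodule (Fin m) k d, ρ γ x - x ∈ I) :=
  statement17_general p k m G ρ hgraded hdet
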